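/- Let b ∈ ℝ^k, let p be an integer with 1 ≤ p ≤ k, and let b⁻ be the componentwise negative part of b. If b⁻ ≠ 0, then the minimum of bᵀx over all x ∈ ℝ^k with ‖x‖₂ = 1, x ≥ 0, and ‖x‖₀ ≤ p equals -‖b⁻ₚ‖₂, where b⁻ₚ is obtained from b⁻ by keeping its p largest components and setting the rest to zero; the minimizer is b⁻ₚ/‖b⁻ₚ‖₂. -/

import Mathlib

/-!
On nonnegative vectors `bᵀx ≥ -(b⁻)ᵀx`, and by Cauchy–Schwarz on the support `T` of `x`,
`(b⁻)ᵀx ≤ ‖b⁻|_T‖ ‖x‖`. Among supports of size at most `p`, the squared mass of `b⁻` is largest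
on the set `S` of its `p` largest entries, so `bᵀx ≥ -‖b⁻ₚ‖` on the feasible set. Equality holds at
`x = b⁻ₚ / ‖b⁻ₚ‖`, because `bᵢ b⁻ᵢ = -(b⁻ᵢ)²` for every `i`.
-/

open Finset

section TopEntries

variable {ι : Type*}

theorem Finset.exists_mem_ne_zero_of_forall_le {f : ι → ℝ} (hf : ∀ i, 0 ≤ f i) {j : ι}
    (hj : f j ≠ 0) {S : Finset ι} (hS : S.Nonempty) (htop : ∀ i ∈ S, ∀ j ∉ S, f j ≤ f i) :
    ∃ i ∈ S, f i ≠ 0 := by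
  by_cases hjS : j ∈ S
  · exact ⟨j, hjS, hj⟩
  · obtain ⟨i, hiS⟩ := hS
    exact ⟨i, hiS, ((hf j).lt_of_ne' hj |>.trans_le (htop i hiS j hjS)).ne'⟩

variable [DecidableEq ι]

theorem Finset.sum_le_sum_of_forall_le_of_card_le {f : ι → ℝ} (hf : ∀ i, 0 ≤ f i)
    {S T : Finset ι} (hcard : #T ≤ #S) (htop : ∀ i ∈ S, ∀ j ∉ S, f j ≤ f i) :
    ∑ i ∈ T, f i ≤ ∑ i ∈ S, f i := by
  have hcard_sdiff : #(T \ S) ≤ #(S \ T) := by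
    have := card_sdiff_add_card_inter T S
    have := card_sdiff_add_card_inter S T
    rw [inter_comm] at this
    omega
  suffices h : ∑ i ∈ T \ S, f i ≤ ∑ i ∈ S \ T, f i by
    rw [← sum_inter_add_sum_sdiff T S, ← sum_inter_add_sum_sdiff S T, inter_comm]
    exact add_le_add_right h _
  rcases (S \ T).eq_empty_or_nonempty with hST | hST
  · have hTS : T \ S = ∅ := card_eq_zero.1 (by simpa [hST] using hcard_sdiff)
    simp [hTS, hST]
  obtain ⟨i₀, hi₀, hi₀_min⟩ := (S \ T).exists_min_image f hST
  calc ∑ i ∈ T \ S, f i ≤ #(T \ S) • f i₀ :=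
        sum_le_card_nsmul _ _ _ fun j hj => htop i₀ (mem_sdiff.1 hi₀).1 j (mem_sdiff.1 hj).2
    _ ≤ #(S \ T) • f i₀ := nsmul_le_nsmul_left (hf i₀) hcard_sdiff
    _ ≤ ∑ i ∈ S \ T, f i := card_nsmul_le_sum _ _ _ hi₀_min

end TopEntries

section Euclidean

variable {ι : Type*} [Fintype ι]

theorem EuclideanSpace.norm_eq_sqrt_sum_sq_of_support_subset {x : EuclideanSpace ℝ ι}
    {s : Finset ι} (hx : ∀ i ∉ s, x i = 0) : ‖x‖ = √(∑ i ∈ s, x i ^ 2) := by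
  rw [← Real.sqrt_sq (norm_nonneg x), EuclideanSpace.real_norm_sq_eq,
    ← sum_subset (subset_univ s) fun i _ hi => by simp [hx i hi]]

theorem EuclideanSpace.sum_mul_le_sqrt_sum_sq_support_mul_norm [DecidableEq ι] (u : ι → ℝ)
    (x : EuclideanSpace ℝ ι) : ∑ i, u i * x i ≤ √(∑ i with x i ≠ 0, u i ^ 2) * ‖x‖ := by
  have hx : ∀ i ∉ ({i | x i ≠ 0} : Finset ι), x i = 0 := by simp
  rw [norm_eq_sqrt_sum_sq_of_support_subset hx,
    ← sum_subset (subset_univ _) fun i _ hi => by simp [hx i hi]]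
  exact Real.sum_mul_le_sqrt_mul_sqrt _ u x

theorem mul_max_neg_zero (a : ℝ) : a * max (-a) 0 = -max (-a) 0 ^ 2 := by
  rcases le_total a 0 with ha | ha
  · rw [max_eq_left (neg_nonneg.2 ha)]; ring
  · rw [max_eq_right (neg_nonpos.2 ha)]; ring

theorem neg_mul_sqrt_sum_sq_top_le_sum_mul [DecidableEq ι] {b bm : ι → ℝ}
    (hbm : ∀ i, bm i = max (-b i) 0) {S : Finset ι} (htop : ∀ i ∈ S, ∀ j ∉ S, bm j ≤ bm i)
    {x : EuclideanSpace ℝ ι} (hx : ∀ i, 0 ≤ x i) (hcard : #{i | x i ≠ 0} ≤ #S) :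
    -(√(∑ i ∈ S, bm i ^ 2) * ‖x‖) ≤ ∑ i, b i * x i := by
  have hbm_nonneg : ∀ i, 0 ≤ bm i := fun i => (hbm i).symm ▸ le_max_right _ _
  have hsupport : ∑ i with x i ≠ 0, bm i ^ 2 ≤ ∑ i ∈ S, bm i ^ 2 :=
    sum_le_sum_of_forall_le_of_card_le (fun i => sq_nonneg _) hcard
      fun i hi j hj => pow_le_pow_left₀ (hbm_nonneg j) (htop i hi j hj) 2
  calc -(√(∑ i ∈ S, bm i ^ 2) * ‖x‖) ≤ -(√(∑ i with x i ≠ 0, bm i ^ 2) * ‖x‖) := by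
        gcongr
    _ ≤ -∑ i, bm i * x i :=
        neg_le_neg (EuclideanSpace.sum_mul_le_sqrt_sum_sq_support_mul_norm bm x)
    _ = ∑ i, -bm i * x i := by simp only [neg_mul, sum_neg_distrib]
    _ ≤ ∑ i, b i * x i := sum_le_sum fun i _ =>
        mul_le_mul_of_nonneg_right ((hbm i).symm ▸ neg_le.1 (le_max_left _ _)) (hx i)

theorem EuclideanSpace.sum_mul_inv_norm_smul {b v : EuclideanSpace ℝ ι} (hv : v ≠ 0)
    (h : ∑ i, b i * v i = -‖v‖ ^ 2) : ∑ i, b i * (‖v‖⁻¹ • v) i = -‖v‖ := by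
  have hv' : ‖v‖ ≠ 0 := norm_ne_zero_iff.2 hv
  simp only [PiLp.smul_apply, smul_eq_mul, mul_left_comm _ ‖v‖⁻¹, ← mul_sum, h]
  field_simp

end Euclidean

theorem stmt_2_general (k p : ℕ) (hp : 1 ≤ p)
    (b bm bp : EuclideanSpace ℝ (Fin k))
    (hbm : ∀ i, bm i = max (-(b i)) 0) (hne : bm ≠ 0)
    (S : Finset (Fin k)) (hScard : S.card = p)
    (hStop : ∀ i ∈ S, ∀ j ∉ S, bm j ≤ bm i)
    (hbp : ∀ i, bp i = if i ∈ S then bm i else 0) :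
    IsLeast {v : ℝ | ∃ x : EuclideanSpace ℝ (Fin k),
        ‖x‖ = 1 ∧ (∀ i, 0 ≤ x i) ∧
        (Finset.univ.filter (fun i => x i ≠ 0)).card ≤ p ∧
        v = ∑ i, b i * x i} (-‖bp‖) ∧
      ‖(‖bp‖⁻¹ • bp : EuclideanSpace ℝ (Fin k))‖ = 1 ∧
      (∀ i, 0 ≤ (‖bp‖⁻¹ • bp : EuclideanSpace ℝ (Fin k)) i) ∧
      (Finset.univ.filter (fun i => (‖bp‖⁻¹ • bp : EuclideanSpace ℝ (Fin k)) i ≠ 0)).card ≤ p ∧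
      ∑ i, b i * (‖bp‖⁻¹ • bp : EuclideanSpace ℝ (Fin k)) i = -‖bp‖ := by
  have hbm_nonneg : ∀ i, 0 ≤ bm i := fun i => (hbm i).symm ▸ le_max_right _ _
  have hbp_nonneg : ∀ i, 0 ≤ bp i := fun i => by rw [hbp i]; split_ifs <;> simp [hbm_nonneg]
  have hbp_support : ∀ i ∉ S, bp i = 0 := fun i hi => by rw [hbp i, if_neg hi]
  have hbp_ne : bp ≠ 0 := by
    obtain ⟨j, hj⟩ : ∃ j, bm j ≠ 0 := by by_contra! h; exact hne (PiLp.ext h)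
    obtain ⟨i, hiS, hi⟩ := exists_mem_ne_zero_of_forall_le hbm_nonneg hj
      (card_pos.1 (by omega)) hStop
    exact fun h => hi (by simpa [hbp i, hiS, h] using (hbp i).symm)
  have hbp_norm : ‖bp‖ = √(∑ i ∈ S, bm i ^ 2) := by
    rw [EuclideanSpace.norm_eq_sqrt_sum_sq_of_support_subset hbp_support]
    exact congrArg _ (sum_congr rfl fun i hi => by rw [hbp i, if_pos hi])
  have hbp_value : ∑ i, b i * bp i = -‖bp‖ ^ 2 := by
    rw [EuclideanSpace.real_norm_sq_eq, ← sum_neg_distrib]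
    refine sum_congr rfl fun i _ => ?_
    rw [hbp i]; split_ifs
    · rw [hbm i, mul_max_neg_zero]
    · ring
  have hw_norm := norm_smul_inv_norm (𝕜 := ℝ) hbp_ne
  have hw_nonneg : ∀ i, 0 ≤ (‖bp‖⁻¹ • bp) i := fun i =>
    mul_nonneg (inv_nonneg.2 (norm_nonneg _)) (hbp_nonneg i)
  have hw_card : #{i | (‖bp‖⁻¹ • bp) i ≠ 0} ≤ p := hScard ▸ card_le_card fun i hi => by
    by_contra hiS; simp [hbp_support i hiS] at hi
  have hw_value := EuclideanSpace.sum_mul_inv_norm_smul hbp_ne hbp_value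
  refine ⟨⟨⟨_, hw_norm, hw_nonneg, hw_card, hw_value.symm⟩, ?_⟩,
    hw_norm, hw_nonneg, hw_card, hw_value⟩
  rintro _ ⟨x, hx_norm, hx_nonneg, hx_card, rfl⟩
  simpa [hbp_norm, hx_norm] using
    neg_mul_sqrt_sum_sq_top_le_sum_mul hbm hStop hx_nonneg (hScard ▸ hx_card)

/-- With the additional sparsity constraint `‖x‖₀ ≤ p`, if `b⁻ ≠ 0`, the
minimum of `bᵀx` over the unit sphere intersected with the nonnegative orthant and the
sparsity set is `-‖b⁻ₚ‖`, where `b⁻ₚ` keeps the `p` largest entries of `b⁻` and zeros the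
rest; the minimizer is `b⁻ₚ/‖b⁻ₚ‖`. -/
theorem stmt_2 (k p : ℕ) (hp : 1 ≤ p) (hpk : p ≤ k)
    (b bm bp : EuclideanSpace ℝ (Fin k))
    (hbm : ∀ i, bm i = max (-(b i)) 0) (hne : bm ≠ 0)
    (S : Finset (Fin k)) (hScard : S.card = p)
    (hStop : ∀ i ∈ S, ∀ j ∉ S, bm j ≤ bm i)
    (hbp : ∀ i, bp i = if i ∈ S then bm i else 0) :
    IsLeast {v : ℝ | ∃ x : EuclideanSpace ℝ (Fin k),
        ‖x‖ = 1 ∧ (∀ i, 0 ≤ x i) ∧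
        (Finset.univ.filter (fun i => x i ≠ 0)).card ≤ p ∧
        v = ∑ i, b i * x i} (-‖bp‖) ∧
      ‖(‖bp‖⁻¹ • bp : EuclideanSpace ℝ (Fin k))‖ = 1 ∧
      (∀ i, 0 ≤ (‖bp‖⁻¹ • bp : EuclideanSpace ℝ (Fin k)) i) ∧
      (Finset.univ.filter (fun i => (‖bp‖⁻¹ • bp : EuclideanSpace ℝ (Fin k)) i ≠ 0)).card ≤ p ∧
      ∑ i, b i * (‖bp‖⁻¹ • bp : EuclideanSpace ℝ (Fin k)) i = -‖bp‖ :=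
  stmt_2_general k p hp b bm bp hbm hne S hScard hStop hbp
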